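/- Let T and T' be full binary rooted trees on a common leaf set L. For a subset ∅ ≠ S ⊊ L define m(S) as the minimum of the four numbers: maxima({v ∈ V(T) : des(v) ⊆ L∖S}), maxima({v ∈ V(T) : des(v) ⊆ S}), maxima({v ∈ V(T) : v ≤ lca(L∖S) and des(v) ⊆ S}) + 1, and maxima({v ∈ V(T) : v ≤ lca(S) and des(v) ⊆ L∖S}) + 1. Then for every doad set S of T' with ∅ ≠ S ≠ L, either S or L ∖ S is a union of at most m(S) doad sets of T. -/
import Mathlib


open TensorProduct PiTensorProduct

namespace TNS

/-- A full binary rooted tree with leaves labelled by `L` (together with a choice of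
left and right child at every node, i.e. a plane structure, which is irrelevant for
the combinatorics of descendant leaf sets). -/
inductive BTree (L : Type*) : Type _ where
  | leaf : L → BTree L
  | node : BTree L → BTree L → BTree L

namespace BTree

variable {L : Type*}

/-- The list of leaf labels, from left to right. -/
def leafList : BTree L → List L
  | .leaf l => [l]
  | .node lt rt => lt.leafList ++ rt.leafList

/-- The set of leaf labels. -/
def leafSet (t : BTree L) : Set L := {l | l ∈ t.leafList}

/-- The subtree at a position (a path of left (`false`) / right (`true`) steps from
the root), if the position is a vertex of the tree. -/
def subtreeAt : BTree L → List Bool → Option (BTree L)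
  | t, [] => some t
  | .leaf _, _ :: _ => none
  | .node lt _, false :: p => lt.subtreeAt p
  | .node _ rt, true :: p => rt.subtreeAt p

/-- `p` is a vertex of `t`; vertices are encoded by their 0/1-path from the root.
In the descendant order, `p` is a descendant of `q` iff `q` is a prefix of `p`
(`q <+: p`). -/
def IsVertex (t : BTree L) (p : List Bool) : Prop := (t.subtreeAt p).isSome

/-- `des t p`: the set of leaves descending from the vertex `p`. -/
def des (t : BTree L) (p : List Bool) : Set L :=
  match t.subtreeAt p with
  | some s => s.leafSet
  | none => ∅

/-- `anti t p`: the complement of `des t p` in the leaf set. -/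
def anti (t : BTree L) (p : List Bool) : Set L := t.leafSet \ t.des p

/-- A doad set: a set of leaves of the form `des v` or `anti v` for a vertex `v`. -/
def IsDoad (t : BTree L) (S : Set L) : Prop :=
  ∃ p, t.IsVertex p ∧ (S = t.des p ∨ S = t.anti p)

/-- `t` is a tree on the leaf set `L`: its leaves are pairwise distinct and exhaust `L`. -/
def IsTreeOn (t : BTree L) : Prop := t.leafList.Nodup ∧ ∀ l : L, l ∈ t.leafList

/-- `S` is a union of at most `m` doad sets of `t`. -/
def IsUnionOfAtMostDoads (t : BTree L) (m : ℕ) (S : Set L) : Prop :=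
  ∃ (k : ℕ) (F : Fin k → Set L), k ≤ m ∧ (∀ i, t.IsDoad (F i)) ∧ (⋃ i, F i) = S

end BTree

namespace BTree

variable {L : Type*}

/-- The up-set `T_{≥S}`: the set of vertices of `t` which are ancestors of some
leaf in `S` (every leaf being an ancestor of itself). -/
def upSet (t : BTree L) (S : Set L) : Set (List Bool) :=
  {p | t.IsVertex p ∧ ∃ l ∈ S, l ∈ t.des p}

/-- The maximal elements of the set `A` of vertices of `t`, in the descendant order
(`p` is a descendant of `q` iff `q <+: p`, so `p` is maximal in `A` iff no vertex of
`A` other than `p` is an ancestor of `p`). -/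
def maximalsIn (t : BTree L) (A : Set (List Bool)) : Set (List Bool) :=
  {p | t.IsVertex p ∧ p ∈ A ∧ ∀ q, t.IsVertex q → q ∈ A → q <+: p → q = p}

open Classical in
/-- The lowest common ancestor of the set `S` of leaves: the longest path `p` such
that all leaves in `S` descend from the vertex at `p`. -/
noncomputable def lcaPath : BTree L → Set L → List Bool
  | .leaf _, _ => []
  | .node lt rt, S =>
    if S ⊆ lt.leafSet then false :: lt.lcaPath S
    else if S ⊆ rt.leafSet then true :: rt.lcaPath S
    else []

end BTree

/-- The combinatorial bound `m(S)` of Theorem `exponents-from-poset`, for a subset `S`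
of the leaf set of `t`: the minimum of `maxima{v : des v ⊆ L∖S}`,
`maxima{v : des v ⊆ S}`, `maxima{v : v ≤ lca(L∖S), des v ⊆ S} + 1` and
`maxima{v : v ≤ lca(S), des v ⊆ L∖S} + 1`. -/
noncomputable def mBound {L : Type*} (t : BTree L) (S : Set L) : ℕ :=
  min
    (min ((t.maximalsIn {p | t.des p ⊆ t.leafSet \ S}).ncard)
      ((t.maximalsIn {p | t.des p ⊆ S}).ncard))
    (min
      ((t.maximalsIn {p | t.lcaPath (t.leafSet \ S) <+: p ∧ t.des p ⊆ S}).ncard + 1)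
      ((t.maximalsIn {p | t.lcaPath S <+: p ∧ t.des p ⊆ t.leafSet \ S}).ncard + 1))

namespace BTree

variable {L : Type*}

theorem leafSet_node (lt rt : BTree L) : (node lt rt).leafSet = lt.leafSet ∪ rt.leafSet := by
  ext l; simp [leafSet, leafList]

theorem des_nil (t : BTree L) : t.des [] = t.leafSet := by cases t <;> rfl

theorem isVertex_nil (t : BTree L) : t.IsVertex [] := by
  simp [IsVertex, subtreeAt]

theorem subtreeAt_append (t : BTree L) (q p : List Bool) :
    t.subtreeAt (q ++ p) = (t.subtreeAt q).bind (fun s => s.subtreeAt p) := by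
  induction q generalizing t with
  | nil => simp [subtreeAt]
  | cons b q ih =>
    cases t with
    | leaf l => simp [subtreeAt]
    | node lt rt => cases b <;> simp [subtreeAt, ih]

theorem des_append {t s : BTree L} {q : List Bool} (h : t.subtreeAt q = some s) (p : List Bool) :
    t.des (q ++ p) = s.des p := by
  unfold des
  rw [subtreeAt_append, h]
  rfl

theorem leafSet_subtree {t s : BTree L} {q : List Bool} (h : t.subtreeAt q = some s) :
    s.leafSet ⊆ t.leafSet := by
  induction q generalizing t with
  | nil =>
    simp only [subtreeAt, Option.some.injEq] at h
    subst h; exact subset_rfl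
  | cons b q ih =>
    cases t with
    | leaf l => simp [subtreeAt] at h
    | node lt rt =>
      rw [leafSet_node]
      cases b
      · exact (ih h).trans Set.subset_union_left
      · exact (ih h).trans Set.subset_union_right

theorem des_subset_leafSet (t : BTree L) (p : List Bool) : t.des p ⊆ t.leafSet := by
  unfold des
  split
  · exact leafSet_subtree ‹_›
  · simp

theorem des_prefix {t : BTree L} {q p : List Bool} (h : q <+: p) : t.des p ⊆ t.des q := by
  obtain ⟨r, rfl⟩ := h
  cases hq : t.subtreeAt q with
  | none =>
    have : t.des (q ++ r) = ∅ := by unfold des; rw [subtreeAt_append, hq]; rfl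
    simp [this]
  | some s =>
    rw [des_append hq]
    calc s.des r ⊆ s.leafSet := des_subset_leafSet s r
      _ = t.des q := by unfold des; rw [hq]

theorem vertexSet_finite (t : BTree L) : {p : List Bool | t.IsVertex p}.Finite := by
  induction t with
  | leaf l =>
    apply Set.Finite.subset (Set.finite_singleton ([] : List Bool))
    intro p hp
    cases p with
    | nil => rfl
    | cons b q => simp [IsVertex, subtreeAt] at hp
  | node lt rt ihl ihr =>
    apply Set.Finite.subset (((Set.finite_singleton ([] : List Bool)).union
      (ihl.image (List.cons false))).union (ihr.image (List.cons true)))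
    intro p hp
    cases p with
    | nil => exact Or.inl (Or.inl rfl)
    | cons b q =>
      cases b
      · exact Or.inl (Or.inr ⟨q, hp, rfl⟩)
      · exact Or.inr ⟨q, hp, rfl⟩

theorem maximalsIn_finite (t : BTree L) (A : Set (List Bool)) : (t.maximalsIn A).Finite :=
  (vertexSet_finite t).subset fun _ hp => hp.1

theorem exists_des_singleton (t : BTree L) {l : L} (hl : l ∈ t.leafSet) :
    ∃ p, t.IsVertex p ∧ t.des p = {l} := by
  induction t with
  | leaf l' =>
    have : l = l' := by simpa [leafSet, leafList] using hl
    subst this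
    exact ⟨[], isVertex_nil _, by ext x; simp [des_nil, leafSet, leafList]⟩
  | node lt rt ihl ihr =>
    rw [leafSet_node] at hl
    cases hl with
    | inl h =>
      obtain ⟨p, hv, hd⟩ := ihl h
      exact ⟨false :: p, hv, hd⟩
    | inr h =>
      obtain ⟨p, hv, hd⟩ := ihr h
      exact ⟨true :: p, hv, hd⟩

theorem exists_des_singleton_prefix {t : BTree L} {q : List Bool} (hv : t.IsVertex q)
    {l : L} (hl : l ∈ t.des q) : ∃ p, q <+: p ∧ t.IsVertex p ∧ t.des p = {l} := by
  obtain ⟨s, hs⟩ := Option.isSome_iff_exists.mp hv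
  have hls : l ∈ s.leafSet := by
    unfold des at hl; rw [hs] at hl; exact hl
  obtain ⟨p, hpv, hpd⟩ := exists_des_singleton s hls
  refine ⟨q ++ p, ⟨p, rfl⟩, ?_, ?_⟩
  · unfold IsVertex at *
    rw [subtreeAt_append, hs]
    exact hpv
  · rw [des_append hs]; exact hpd

theorem exists_maximal_aux (t : BTree L) (A : Set (List Bool)) :
    ∀ n (p : List Bool), p.length ≤ n → t.IsVertex p → p ∈ A →
      ∃ q ∈ t.maximalsIn A, q <+: p := by
  intro n
  induction n with
  | zero =>
    intro p hlen hv hA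
    have hp0 : p = [] := List.length_eq_zero_iff.mp (Nat.le_zero.mp hlen)
    subst hp0
    exact ⟨[], ⟨hv, hA, fun q _ _ hq => List.prefix_nil.mp hq⟩, List.prefix_refl _⟩
  | succ n ih =>
    intro p hlen hv hA
    by_cases h : ∀ q, t.IsVertex q → q ∈ A → q <+: p → q = p
    · exact ⟨p, ⟨hv, hA, h⟩, List.prefix_refl p⟩
    · push_neg at h
      obtain ⟨q, hqv, hqA, hqp, hne⟩ := h
      have hlt : q.length ≤ n := by
        have h1 := hqp.length_le
        have h2 : q.length ≠ p.length := fun he => hne (List.prefix_iff_eq_take.mp hqp ▸ by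
          rw [he, List.take_length])
        omega
      obtain ⟨r, hr, hrq⟩ := ih q hlt hqv hqA
      exact ⟨r, hr, hrq.trans hqp⟩

theorem exists_maximal (t : BTree L) (A : Set (List Bool)) {p : List Bool}
    (hv : t.IsVertex p) (hA : p ∈ A) : ∃ q ∈ t.maximalsIn A, q <+: p :=
  exists_maximal_aux t A p.length p le_rfl hv hA

theorem lca_spec (t : BTree L) (S' : Set L) (hS' : S' ⊆ t.leafSet) :
    t.IsVertex (t.lcaPath S') ∧ S' ⊆ t.des (t.lcaPath S') := by
  induction t with
  | leaf l => exact ⟨isVertex_nil _, hS'⟩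
  | node lt rt ihl ihr =>
    rw [lcaPath]
    split_ifs with h1 h2
    · exact ihl h1
    · exact ihr h2
    · exact ⟨isVertex_nil _, hS'⟩

theorem cover_basic (t : BTree L) (hfull : ∀ l : L, l ∈ t.leafList) (S : Set L) :
    ⋃ p ∈ t.maximalsIn {p | t.des p ⊆ S}, t.des p = S := by
  apply Set.Subset.antisymm
  · exact Set.iUnion₂_subset fun p hp => hp.2.1
  · intro l hl
    obtain ⟨p, hpv, hpd⟩ := exists_des_singleton t (hfull l)
    have hpA : p ∈ {p | t.des p ⊆ S} := by
      rw [Set.mem_setOf_eq, hpd]; simpa using hl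
    obtain ⟨q, hq, hqp⟩ := exists_maximal t _ hpv hpA
    exact Set.mem_biUnion hq (des_prefix hqp (by rw [hpd]; rfl))

theorem cover_lca (t : BTree L) (C S : Set L) (hC : C ⊆ t.leafSet)
    (hCS : t.leafSet \ C = S) :
    t.anti (t.lcaPath C) ∪
      ⋃ p ∈ t.maximalsIn {p | t.lcaPath C <+: p ∧ t.des p ⊆ S}, t.des p = S := by
  obtain ⟨hv0, hC0⟩ := lca_spec t C hC
  apply Set.Subset.antisymm
  · apply Set.union_subset
    · intro l hl
      rw [← hCS]
      exact ⟨hl.1, fun hlc => hl.2 (hC0 hlc)⟩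
    · exact Set.iUnion₂_subset fun p hp => hp.2.1.2
  · intro l hl
    by_cases hld : l ∈ t.des (t.lcaPath C)
    · obtain ⟨p, hpre, hpv, hpd⟩ := exists_des_singleton_prefix hv0 hld
      have hpA : p ∈ {p | t.lcaPath C <+: p ∧ t.des p ⊆ S} :=
        ⟨hpre, by rw [hpd]; simpa using hl⟩
      obtain ⟨q, hq, hqp⟩ := exists_maximal t _ hpv hpA
      exact Or.inr (Set.mem_biUnion hq (des_prefix hqp (by rw [hpd]; rfl)))
    · refine Or.inl ⟨?_, hld⟩
      rw [← hCS] at hl; exact hl.1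

theorem isUnion_biUnion (t : BTree L) (A : Set (List Bool)) (hfin : A.Finite)
    (hvA : ∀ p ∈ A, t.IsVertex p) {S : Set L} (hU : (⋃ p ∈ A, t.des p) = S) :
    t.IsUnionOfAtMostDoads A.ncard S := by
  have : Finite A := hfin.to_subtype
  have e : Fin A.ncard ≃ A :=
    (Finite.equivFinOfCardEq (Nat.card_coe_set_eq A)).symm
  refine ⟨A.ncard, fun i => t.des (e i), le_refl _,
    fun i => ⟨e i, hvA _ (e i).2, Or.inl rfl⟩, ?_⟩
  rw [← hU]
  ext l
  simp only [Set.mem_iUnion]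
  constructor
  · rintro ⟨i, hi⟩; exact ⟨e i, (e i).2, hi⟩
  · rintro ⟨p, hp, hlp⟩
    exact ⟨e.symm ⟨p, hp⟩, by rw [Equiv.apply_symm_apply]; exact hlp⟩

theorem isUnion_union_biUnion (t : BTree L) (A : Set (List Bool)) (hfin : A.Finite)
    (hvA : ∀ p ∈ A, t.IsVertex p) {E S : Set L} (hE : t.IsDoad E)
    (hU : (E ∪ ⋃ p ∈ A, t.des p) = S) :
    t.IsUnionOfAtMostDoads (A.ncard + 1) S := by
  obtain ⟨k, F, hk, hdoads, hFU⟩ := isUnion_biUnion t A hfin hvA rfl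
  refine ⟨k + 1, Fin.cons E F, by omega, ?_, ?_⟩
  · intro i
    rcases Fin.eq_zero_or_eq_succ i with rfl | ⟨j, rfl⟩
    · simpa using hE
    · simpa using hdoads j
  · rw [← hU, ← hFU]
    ext l
    simp only [Set.mem_iUnion, Set.mem_union]
    constructor
    · rintro ⟨i, hi⟩
      rcases Fin.eq_zero_or_eq_succ i with rfl | ⟨j, rfl⟩
      · left; simpa using hi
      · right; exact ⟨j, by simpa using hi⟩
    · rintro (h | ⟨j, hj⟩)
      · exact ⟨0, by simpa using h⟩
      · exact ⟨j.succ, by simpa using hj⟩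

theorem isUnion_mono (t : BTree L) {k m : ℕ} (h : k ≤ m) {S : Set L}
    (hk : t.IsUnionOfAtMostDoads k S) : t.IsUnionOfAtMostDoads m S := by
  obtain ⟨k', F, hk', h1, h2⟩ := hk
  exact ⟨k', F, hk'.trans h, h1, h2⟩

end BTree

/-- Theorem `exponents-from-poset`, covering part: for every doad set `S` of `T'`
with `∅ ≠ S ≠ L`, either `S` or `L ∖ S` is a union of at most `m(S)` doad sets
of `T`. -/
theorem statement11 {L : Type*} (T T' : BTree L) (hT : T.IsTreeOn) (hT' : T'.IsTreeOn)
    (S : Set L) (hdoad : T'.IsDoad S) (hne : S.Nonempty) (hSL : S ≠ T.leafSet) :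
    T.IsUnionOfAtMostDoads (mBound T S) S ∨
    T.IsUnionOfAtMostDoads (mBound T S) (T.leafSet \ S) := by
  classical
  have hfull := hT.2
  have hls : T.leafSet = Set.univ := Set.eq_univ_of_forall hfull
  set a := (T.maximalsIn {p | T.des p ⊆ T.leafSet \ S}).ncard with ha
  set b := (T.maximalsIn {p | T.des p ⊆ S}).ncard with hb
  set c := (T.maximalsIn {p | T.lcaPath (T.leafSet \ S) <+: p ∧ T.des p ⊆ S}).ncard with hc
  set d := (T.maximalsIn {p | T.lcaPath S <+: p ∧ T.des p ⊆ T.leafSet \ S}).ncard with hd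
  -- the four covers
  have cov_a : T.IsUnionOfAtMostDoads a (T.leafSet \ S) :=
    BTree.isUnion_biUnion T _ (BTree.maximalsIn_finite T _) (fun p hp => hp.1)
      (BTree.cover_basic T hfull (T.leafSet \ S))
  have cov_b : T.IsUnionOfAtMostDoads b S :=
    BTree.isUnion_biUnion T _ (BTree.maximalsIn_finite T _) (fun p hp => hp.1)
      (BTree.cover_basic T hfull S)
  have hCsub : T.leafSet \ S ⊆ T.leafSet := Set.diff_subset
  have hSsub : S ⊆ T.leafSet := by rw [hls]; exact Set.subset_univ S
  have hCS : T.leafSet \ (T.leafSet \ S) = S := by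
    rw [hls]; ext l; simp
  have cov_c : T.IsUnionOfAtMostDoads (c + 1) S := by
    refine BTree.isUnion_union_biUnion T _ (BTree.maximalsIn_finite T _) (fun p hp => hp.1)
      ?_ (BTree.cover_lca T (T.leafSet \ S) S hCsub hCS)
    exact ⟨T.lcaPath (T.leafSet \ S), (BTree.lca_spec T _ hCsub).1, Or.inr rfl⟩
  have cov_d : T.IsUnionOfAtMostDoads (d + 1) (T.leafSet \ S) := by
    refine BTree.isUnion_union_biUnion T _ (BTree.maximalsIn_finite T _) (fun p hp => hp.1)
      ?_ (BTree.cover_lca T S (T.leafSet \ S) hSsub rfl)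
    exact ⟨T.lcaPath S, (BTree.lca_spec T _ hSsub).1, Or.inr rfl⟩
  have hm : mBound T S = a ∨ mBound T S = b ∨ mBound T S = c + 1 ∨ mBound T S = d + 1 := by
    unfold mBound
    rw [← ha, ← hb, ← hc, ← hd]
    omega
  rcases hm with h | h | h | h
  · exact Or.inr (h ▸ cov_a)
  · exact Or.inl (h ▸ cov_b)
  · exact Or.inl (h ▸ cov_c)
  · exact Or.inr (h ▸ cov_d)

end TNS
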